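/- arXiv:1402.3500 — 8 statements merged into one kernel-verified Lean document; each statement's English description precedes it below -/
import Mathlib

section
/- Let s, t, v be nonnegative reals with t ≤ v ≤ s+t and s+t ≤ 2v. Then for all real y, z satisfying 0 ≤ y ≤ s, 0 ≤ z ≤ t, and s+t−v ≤ y+z ≤ v, the function f(y,z) = −4z² − 4yz + 2ty + (2s+4t)z satisfies f(y,z) ≥ 2t(s+t−v). -/
theorem stmt3 (s t v : ℝ) (hs : 0 ≤ s) (ht : 0 ≤ t) (hv : 0 ≤ v)
    (h1 : t ≤ v) (h2 : v ≤ s + t) (h3 : s + t ≤ 2 * v)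
    (y z : ℝ) (hy0 : 0 ≤ y) (hys : y ≤ s) (hz0 : 0 ≤ z) (hzt : z ≤ t)
    (hl : s + t - v ≤ y + z) (hu : y + z ≤ v) :
    2 * t * (s + t - v) ≤ -4 * z ^ 2 - 4 * y * z + 2 * t * y + (2 * s + 4 * t) * z := by
  rcases le_total (2 * (y + z)) (s + t) with h | h
  · nlinarith [mul_nonneg hz0 (sub_nonneg.2 h), mul_nonneg ht (sub_nonneg.2 hl)]
  · nlinarith [mul_nonneg (sub_nonneg.2 hzt) (sub_nonneg.2 h), mul_nonneg ht (sub_nonneg.2 hu)]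
end

section
/- Let s, t, v be nonnegative reals with v < t and s+t ≤ 2v. Then for all real y, z satisfying 0 ≤ y ≤ s, 0 ≤ z ≤ t, and s+t−v ≤ y+z ≤ v, the function f(y,z) = −4z² − 4yz + 2ty + (2s+4t)z satisfies f(y,z) ≥ 2v(s+2t−2v). -/
theorem stmt4 (s t v : ℝ) (hs : 0 ≤ s) (ht : 0 ≤ t) (hv : 0 ≤ v)
    (h1 : v < t) (h3 : s + t ≤ 2 * v)
    (y z : ℝ) (hy0 : 0 ≤ y) (hys : y ≤ s) (hz0 : 0 ≤ z) (hzt : z ≤ t)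
    (hl : s + t - v ≤ y + z) (hu : y + z ≤ v) :
    2 * v * (s + 2 * t - 2 * v) ≤ -4 * z ^ 2 - 4 * y * z + 2 * t * y + (2 * s + 4 * t) * z := by
  nlinarith [mul_nonneg hz0 (sub_nonneg.2 hzt), mul_nonneg hy0 (sub_nonneg.2 hys),
    mul_nonneg (sub_nonneg.2 hu) (sub_nonneg.2 h1.le),
    mul_nonneg (by linarith : (0:ℝ) ≤ y + z - (s + t - v)) (by linarith : (0:ℝ) ≤ t - v),
    mul_nonneg (sub_nonneg.2 hu) (by linarith : (0:ℝ) ≤ 2*v - s - t),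
    mul_nonneg (by linarith : (0:ℝ) ≤ y + z - (s + t - v)) (by linarith : (0:ℝ) ≤ 2*v - s - t),
    mul_nonneg hz0 (by linarith : (0:ℝ) ≤ v - y - z),
    mul_nonneg (sub_nonneg.2 hzt) (by linarith : (0:ℝ) ≤ v - y - z),
    mul_nonneg hz0 (by linarith : (0:ℝ) ≤ y + z - (s + t - v)),
    mul_nonneg (sub_nonneg.2 hzt) (by linarith : (0:ℝ) ≤ y + z - (s + t - v))]
end

section
/- Consider the 3×3 matrices A = [[2,1,1],[1,0,0],[1,0,0]] and B = [[0,1,1],[1,0,0],[1,0,0]]. The matrix A is anti-Monge (satisfies a_{ij}+a_{rs} ≥ a_{is}+a_{rj} for i<r, j<s, with nonnegative entries) but not monotone. The identity permutation yields QAP objective Z_id(A,B) = 4, while the transposition swapping indices 1 and 3 yields objective 2; hence the identity permutation is not optimal. -/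
/-- QAP objective value. -/
def Z {n : ℕ} (A B : Matrix (Fin n) (Fin n) ℝ) (π : Equiv.Perm (Fin n)) : ℝ :=
  ∑ i, ∑ j, A (π i) (π j) * B i j

theorem stmt8 :
    let A : Matrix (Fin 3) (Fin 3) ℝ := !![2,1,1; 1,0,0; 1,0,0]
    let B : Matrix (Fin 3) (Fin 3) ℝ := !![0,1,1; 1,0,0; 1,0,0]
    -- A is anti-Monge:
    ((∀ i j, 0 ≤ A i j) ∧
     (∀ i r j s : Fin 3, i < r → j < s → A i s + A r j ≤ A i j + A r s)) ∧
    -- A is not monotone: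
    (¬ ∀ i j k l : Fin 3, i ≤ k → j ≤ l → A i j ≤ A k l) ∧
    -- identity value 4, swap (0,3) value 2, identity not optimal:
    Z A B (Equiv.refl (Fin 3)) = 4 ∧
    Z A B (Equiv.swap 0 2) = 2 ∧
    ¬ ∀ σ : Equiv.Perm (Fin 3), Z A B (Equiv.refl (Fin 3)) ≤ Z A B σ := by
  intro A B
  refine ⟨⟨?_, ?_⟩, ?_, ?_, ?_, ?_⟩
  · intro i j; fin_cases i <;> fin_cases j <;> norm_num [A]
  · intro i r j s hir hjs
    fin_cases i <;> fin_cases r <;> fin_cases j <;> fin_cases s <;>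
      simp_all <;> norm_num [A, Matrix.vecHead, Matrix.vecTail, Matrix.cons_val_two, Matrix.cons_val_one, Matrix.cons_val_zero]
  · intro h
    have := h 0 0 1 1 (by decide) (by decide)
    norm_num [A] at this
  · simp [Z, Fin.sum_univ_three, A, B, Matrix.vecHead, Matrix.vecTail]; norm_num
  · simp [Z, Fin.sum_univ_three, A, B, Matrix.vecHead, Matrix.vecTail, Equiv.swap_apply_def]; norm_num
  · intro h
    have h1 : Z A B (Equiv.refl (Fin 3)) = 4 := by
      simp [Z, Fin.sum_univ_three, A, B, Matrix.vecHead, Matrix.vecTail]; norm_num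
    have h2 : Z A B (Equiv.swap 0 2) = 2 := by
      simp [Z, Fin.sum_univ_three, A, B, Matrix.vecHead, Matrix.vecTail, Equiv.swap_apply_def]; norm_num
    have := h (Equiv.swap 0 2)
    rw [h1, h2] at this; linarith
end

section
/- Every symmetric anti-Monge matrix A can be written as A' + A'' where A' is a monotone symmetric anti-Monge matrix and A'' is a sum matrix (a''_{ij} = α_i + α_j for some reals α_i). -/
theorem stmt10 {n : ℕ} (A : Matrix (Fin n) (Fin n) ℝ)
    (hsym : A.IsSymm)
    (hnonneg : ∀ i j, 0 ≤ A i j)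
    (hAM : ∀ i r j s : Fin n, i < r → j < s → A i s + A r j ≤ A i j + A r s) :
    ∃ (A' : Matrix (Fin n) (Fin n) ℝ) (α : Fin n → ℝ),
      A = A' + Matrix.of (fun i j => α i + α j) ∧
      A'.IsSymm ∧
      (∀ i j, 0 ≤ A' i j) ∧
      (∀ i r j s : Fin n, i < r → j < s → A' i s + A' r j ≤ A' i j + A' r s) ∧
      (∀ i j k l : Fin n, i ≤ k → j ≤ l → A' i j ≤ A' k l) := by
  rcases Nat.eq_zero_or_pos n with h0 | hn
  · subst h0
    refine ⟨A, 0, ?_, hsym, hnonneg, hAM, fun i => i.elim0⟩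
    ext i j
    exact i.elim0
  · set z : Fin n := ⟨0, hn⟩ with hzdef
    have hz : ∀ i : Fin n, z ≤ i := fun i => Fin.le_def.mpr (Nat.zero_le _)
    have hs : ∀ i j, A j i = A i j := fun i j => hsym.apply i j
    have hAM' : ∀ i r j s : Fin n, i ≤ r → j ≤ s → A i s + A r j ≤ A i j + A r s := by
      intro i r j s hir hjs
      rcases eq_or_lt_of_le hir with rfl | hir
      · linarith
      rcases eq_or_lt_of_le hjs with rfl | hjs
      · linarith
      exact hAM i r j s hir hjs
    set α : Fin n → ℝ := fun i => A z i - A z z / 2 with hα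
    set A' : Matrix (Fin n) (Fin n) ℝ := Matrix.of (fun i j => A i j - α i - α j) with hA'
    have hA'app : ∀ i j, A' i j = A i j - α i - α j := fun i j => rfl
    have hmono : ∀ i j k l : Fin n, i ≤ k → j ≤ l → A' i j ≤ A' k l := by
      intro i j k l hik hjl
      have h1 : A i j + A k z ≤ A i z + A k j := hAM' i k z j hik (hz j)
      have h2 : A z l + A k j ≤ A z j + A k l := hAM' z k j l (hz k) hjl
      have e1 : A k z = A z k := hs z k
      have e2 : A i z = A z i := hs z i
      simp only [hA'app, hα]
      linarith
    refine ⟨A', α, ?_, ?_, ?_, ?_, hmono⟩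
    · ext i j
      simp [hA'app, Matrix.add_apply]
    · refine Matrix.IsSymm.ext (fun i j => ?_)
      simp only [hA'app]
      rw [hs i j]
      ring
    · intro i j
      have := hmono z z i j (hz i) (hz j)
      have hzz : A' z z = 0 := by simp [hA'app, hα]; ring
      linarith
    · intro i r j s hir hjs
      have := hAM i r j s hir hjs
      simp only [hA'app]
      linarith
end

section
/- For reals 0 < μ < λ, every 1-λ-1 block matrix can be written as a nonnegative linear combination of two 1-μ-1 block matrices. -/
/-- Block index (0, 1 or 2) of a row/column `i` for a three-interval partition with the
first two intervals of sizes `r` and `s`. -/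
def blk (r s : ℕ) {n : ℕ} (i : Fin n) : ℕ :=
  if (i : ℕ) < r then 0 else if (i : ℕ) < r + s then 1 else 2

/-- The 1-λ-1 pattern `[[0,0,0],[0,0,1],[0,1,λ]]` evaluated at block indices. -/
def pat (lam : ℝ) (k l : ℕ) : ℝ :=
  if k = 2 ∧ l = 2 then lam else if (k = 1 ∧ l = 2) ∨ (k = 2 ∧ l = 1) then 1 else 0

/-- `B` is a 1-λ-1 block matrix. -/
def IsOneLamOne (lam : ℝ) {n : ℕ} (B : Matrix (Fin n) (Fin n) ℝ) : Prop :=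
  ∃ r s t : ℕ, r + s + t = n ∧ ∀ i j, B i j = pat lam (blk r s i) (blk r s j)

lemma pat_key (mu lam : ℝ) (h0 : mu ≠ 0) (k l k' l' : ℕ)
    (hk : k' = if k = 2 then 2 else 0) (hl : l' = if l = 2 then 2 else 0) :
    pat lam k l = pat mu k l + (lam - mu) / mu * pat mu k' l' := by
  subst hk hl
  by_cases hk2 : k = 2 <;> by_cases hl2 : l = 2 <;>
    simp [pat, hk2, hl2] <;> field_simp <;> ring

lemma blk_merge {n : ℕ} (r s : ℕ) (i : Fin n) :
    blk (r + s) 0 i = if blk r s i = 2 then 2 else 0 := by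
  unfold blk
  rcases lt_or_ge (i:ℕ) r with h|h
  · simp [h, Nat.lt_of_lt_of_le h (Nat.le_add_right r s)]
  · rcases lt_or_ge (i:ℕ) (r+s) with h2|h2 <;>
      simp [h2, Nat.not_lt_of_ge h, Nat.not_lt_of_ge h2]

theorem stmt12 (mu lam : ℝ) (h0 : 0 < mu) (h1 : mu < lam) {n : ℕ}
    (B : Matrix (Fin n) (Fin n) ℝ) (hB : IsOneLamOne lam B) :
    ∃ (c₁ c₂ : ℝ) (B₁ B₂ : Matrix (Fin n) (Fin n) ℝ),
      0 ≤ c₁ ∧ 0 ≤ c₂ ∧ IsOneLamOne mu B₁ ∧ IsOneLamOne mu B₂ ∧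
      B = c₁ • B₁ + c₂ • B₂ := by
  obtain ⟨r, s, t, hrst, hpat⟩ := hB
  refine ⟨1, (lam - mu) / mu,
    fun i j => pat mu (blk r s i) (blk r s j),
    fun i j => pat mu (blk (r + s) 0 i) (blk (r + s) 0 j),
    zero_le_one, div_nonneg (by linarith) h0.le,
    ⟨r, s, t, hrst, fun _ _ => rfl⟩,
    ⟨r + s, 0, t, by omega, fun _ _ => rfl⟩, ?_⟩
  ext i j
  simp only [Matrix.add_apply, Matrix.smul_apply, Pi.smul_apply, smul_eq_mul, one_mul, hpat]
  rw [pat_key mu lam h0.ne' _ _ _ _ (blk_merge r s i) (blk_merge r s j)]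
  change _ = (1:ℝ) * pat mu (blk r s i) (blk r s j) + (lam - mu) / mu * pat mu (blk (r + s) 0 i) (blk (r + s) 0 j)
  ring
end

section
/- Consider the 3×3 matrices A₁ = [[1,1,2],[1,1,2],[2,2,4]], A₂ = [[1,2,2],[2,4,4],[2,4,4]], and B = [[0,2,2],[2,1,1],[2,1,1]]. For the permutation π₂ reversing {1,2,3} (i.e., π₂ = (1 3)), one has Z_{id}(A₁,B) = 21 > 20 = Z_{π₂}(A₁,B), while Z_{id}(A₂,B) = 32 < 33 = Z_{π₂}(A₂,B). Hence no single permutation is optimal for all Product-Block QAP instances with this pattern. -/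
set_option maxHeartbeats 1000000

theorem stmt15 :
    let A₁ : Matrix (Fin 3) (Fin 3) ℝ := !![1,1,2; 1,1,2; 2,2,4]
    let A₂ : Matrix (Fin 3) (Fin 3) ℝ := !![1,2,2; 2,4,4; 2,4,4]
    let B : Matrix (Fin 3) (Fin 3) ℝ := !![0,2,2; 2,1,1; 2,1,1]
    let π₂ : Equiv.Perm (Fin 3) := Equiv.swap 0 2
    Z A₁ B (Equiv.refl (Fin 3)) = 21 ∧ Z A₁ B π₂ = 20 ∧
    Z A₂ B (Equiv.refl (Fin 3)) = 32 ∧ Z A₂ B π₂ = 33 ∧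
    ¬ ∃ π : Equiv.Perm (Fin 3),
        (∀ σ : Equiv.Perm (Fin 3), Z A₁ B π ≤ Z A₁ B σ) ∧
        (∀ σ : Equiv.Perm (Fin 3), Z A₂ B π ≤ Z A₂ B σ) := by
  intro A₁ A₂ B π₂
  refine ⟨?_, ?_, ?_, ?_, ?_⟩
  · simp [Z, Fin.sum_univ_three, A₁, B, Matrix.vecHead, Matrix.vecTail]; norm_num
  · simp [Z, Fin.sum_univ_three, A₁, B, π₂, Equiv.swap_apply_def, Matrix.vecHead, Matrix.vecTail]; norm_num
  · simp [Z, Fin.sum_univ_three, A₂, B, Matrix.vecHead, Matrix.vecTail]; norm_num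
  · simp [Z, Fin.sum_univ_three, A₂, B, π₂, Equiv.swap_apply_def, Matrix.vecHead, Matrix.vecTail]; norm_num
  · rintro ⟨π, h1, h2⟩
    have ha := h1 π₂
    have hb := h2 (Equiv.refl _)
    clear h1 h2
    have h01 : π 0 ≠ π 1 := fun h => by simpa using π.injective h
    have h02 : π 0 ≠ π 2 := fun h => by simpa using π.injective h
    have h12 : π 1 ≠ π 2 := fun h => by simpa using π.injective h
    simp only [Z, Fin.sum_univ_three] at ha hb
    generalize π 0 = x at *
    generalize π 1 = y at *
    generalize π 2 = z at *
    fin_cases x <;> fin_cases y <;> fin_cases z <;>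
      simp_all [A₁, A₂, B, π₂, Equiv.swap_apply_def, Matrix.vecHead, Matrix.vecTail] <;>
      norm_num at *
end

section
/- If A is an n×n monotone anti-Monge matrix and B is a multi-cut matrix in normal form (block matrix with 0-diagonal/1-off-diagonal pattern and block sizes in nondecreasing order), then the identity permutation minimizes Z_π(A,B) = Σ_i Σ_j a_{π(i)π(j)} b_{ij} over all permutations π. -/
open Finset


lemma exch (M uh uk vh vk : ℕ) (h1 : vh ≤ uh) (h2 : uh ≤ M) (h3 : vk ≤ uk) (h4 : uk ≤ M) :
    uh*vh + uk*vk ≤ min M (uh+uk) * min M (vh+vk)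
      + (uh+uk - min M (uh+uk)) * (vh+vk - min M (vh+vk)) := by
  rcases le_or_gt (uh+uk) M with hU | hU
  · have hV : vh+vk ≤ M := by omega
    rw [min_eq_right hU, min_eq_right hV]
    nlinarith
  · rcases le_or_gt (vh+vk) M with hV | hV
    · rw [min_eq_left hU.le, min_eq_right hV]
      have : (vh+vk - (vh+vk)) = 0 := by omega
      nlinarith [Nat.mul_le_mul h2 (le_refl vh), Nat.mul_le_mul h4 (le_refl vk)]
    · rw [min_eq_left hU.le, min_eq_left hV.le]
      obtain ⟨a, ha⟩ : ∃ a, uh+uk = M + a := ⟨uh+uk-M, by omega⟩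
      obtain ⟨b, hb⟩ : ∃ b, vh+vk = M + b := ⟨vh+vk-M, by omega⟩
      have e1 : uh+uk-M = a := by omega
      have e2 : vh+vk-M = b := by omega
      rw [e1, e2]
      zify
      nlinarith [mul_nonneg (by omega : (0:ℤ) ≤ M - uh) (by omega : (0:ℤ) ≤ M - vk),
        mul_nonneg (by omega : (0:ℤ) ≤ M - uk) (by omega : (0:ℤ) ≤ M - vh)]
lemma sum_ite_last (L a : ℕ) (f : ℕ → ℕ) :
    ∑ i ∈ range (L+1), (if i = L then a else f i) = (∑ i ∈ range L, f i) + a := by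
  rw [Finset.sum_range_succ]
  simp only [if_pos rfl]
  congr 1
  exact Finset.sum_congr rfl fun i hi => if_neg (by simp at hi; omega)

lemma sum_ite_last2 (L a b : ℕ) (f g : ℕ → ℕ) :
    ∑ i ∈ range (L+1), (if i = L then a else f i) * (if i = L then b else g i)
      = (∑ i ∈ range L, f i * g i) + a * b := by
  rw [Finset.sum_range_succ]
  simp only [if_pos rfl]
  congr 1
  exact Finset.sum_congr rfl fun i hi => by rw [if_neg (by simp at hi; omega), if_neg (by simp at hi; omega)]

lemma fill : ∀ (L : ℕ) (m u v : ℕ → ℕ) (M uh vh : ℕ),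
    vh ≤ uh → uh ≤ M →
    (∀ i < L, v i ≤ u i) → (∀ i < L, u i ≤ m i) → (∀ i < L, m i ≤ M) →
    ∃ u' v' : ℕ → ℕ,
      (∀ i < L, v' i ≤ u' i) ∧ (∀ i < L, u' i ≤ m i) ∧
      ((∑ i ∈ range L, u' i) = (uh + ∑ i ∈ range L, u i) - min M (uh + ∑ i ∈ range L, u i)) ∧
      ((∑ i ∈ range L, v' i) = (vh + ∑ i ∈ range L, v i) - min M (vh + ∑ i ∈ range L, v i)) ∧
      uh*vh + ∑ i ∈ range L, u i * v i ≤
        min M (uh + ∑ i ∈ range L, u i) * min M (vh + ∑ i ∈ range L, v i)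
          + ∑ i ∈ range L, u' i * v' i := by
  intro L
  induction L with
  | zero =>
    intro m u v M uh vh h1 h2 _ _ _
    have e1 : min M uh = uh := by omega
    have e2 : min M vh = vh := by omega
    refine ⟨0, 0, by simp, by simp, by simp [e1], by simp [e2], by simp [e1, e2]⟩
  | succ L ih =>
    intro m u v M uh vh h1 h2 hvu hum hmM
    have hvuL := hvu L (by omega)
    have humL := hum L (by omega)
    have hmML := hmM L (by omega)
    obtain ⟨u'', v'', hvu'', hum'', hsu'', hsv'', hineq''⟩ :=
      ih m u v M (min M (uh + u L)) (min M (vh + v L)) (by omega) (by omega)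
        (fun i hi => hvu i (by omega)) (fun i hi => hum i (by omega)) (fun i hi => hmM i (by omega))
    refine ⟨fun i => if i = L then uh + u L - min M (uh + u L) else u'' i,
            fun i => if i = L then vh + v L - min M (vh + v L) else v'' i, ?_, ?_, ?_, ?_, ?_⟩
    · intro i hi
      dsimp only
      rcases eq_or_ne i L with rfl | hne
      · rw [if_pos rfl, if_pos rfl]; omega
      · rw [if_neg hne, if_neg hne]; exact hvu'' i (by omega)
    · intro i hi
      dsimp only
      rcases eq_or_ne i L with rfl | hne
      · rw [if_pos rfl]; omega
      · rw [if_neg hne]; exact hum'' i (by omega)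
    · rw [sum_ite_last, Finset.sum_range_succ]
      omega
    · rw [sum_ite_last, Finset.sum_range_succ]
      omega
    · rw [sum_ite_last2, Finset.sum_range_succ, Finset.sum_range_succ, Finset.sum_range_succ]
      have hex := exch M uh (u L) vh (v L) h1 h2 hvuL (humL.trans hmML)
      have e1 : min M (min M (uh + u L) + ∑ i ∈ range L, u i) = min M (uh + (∑ x ∈ range L, u x + u L)) := by omega
      have e2 : min M (min M (vh + v L) + ∑ i ∈ range L, v i) = min M (vh + (∑ x ∈ range L, v x + v L)) := by omega
      rw [e1, e2] at hineq''
      omega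
def uStar (m : ℕ → ℕ) (L T k : ℕ) : ℕ := min (m k) (T - ∑ i ∈ Ico (k+1) L, m i)

lemma key : ∀ (L : ℕ) (m u v : ℕ → ℕ),
    (∀ i < L, v i ≤ u i) → (∀ i < L, u i ≤ m i) →
    (∀ i j, i ≤ j → j < L → m i ≤ m j) →
    ∑ k ∈ range L, u k * v k ≤
      ∑ k ∈ range L, uStar m L (∑ k ∈ range L, u k) k * uStar m L (∑ k ∈ range L, v k) k := by
  intro L
  induction L with
  | zero => intro m u v _ _ _; simp
  | succ L ih =>
    intro m u v hvu hum hmm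
    obtain ⟨u', v', hvu', hum', hsu', hsv', hineq⟩ :=
      fill L m u v (m L) (u L) (v L) (hvu L (by omega)) (hum L (by omega))
        (fun i hi => hvu i (by omega)) (fun i hi => hum i (by omega))
        (fun i hi => hmm i L (by omega) (by omega))
    have hIH := ih m u' v' hvu' hum' (fun i j hij hj => hmm i j hij (by omega))
    -- notation
    set T := ∑ k ∈ range (L+1), u k with hT
    set S := ∑ k ∈ range (L+1), v k with hS
    have hTe : T = u L + ∑ i ∈ range L, u i := by rw [hT, Finset.sum_range_succ]; ring
    have hSe : S = v L + ∑ i ∈ range L, v i := by rw [hS, Finset.sum_range_succ]; ring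
    have hsu2 : ∑ i ∈ range L, u' i = T - m L := by omega
    have hsv2 : ∑ i ∈ range L, v' i = S - m L := by omega
    rw [hsu2, hsv2] at hIH
    have hlast : uStar m (L+1) T L * uStar m (L+1) S L = min (m L) T * min (m L) S := by
      have : (Ico (L+1) (L+1)) = ∅ := by simp
      simp [uStar, this]
    have hrest : ∀ k ∈ range L, uStar m (L+1) T k * uStar m (L+1) S k
        = uStar m L (T - m L) k * uStar m L (S - m L) k := by
      intro k hk
      simp only [Finset.mem_range] at hk
      have hsplit : ∑ i ∈ Ico (k+1) (L+1), m i = (∑ i ∈ Ico (k+1) L, m i) + m L :=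
        Finset.sum_Ico_succ_top (by omega) m
      simp only [uStar, hsplit]
      congr 2 <;> omega
    calc ∑ k ∈ range (L+1), u k * v k
        = u L * v L + ∑ k ∈ range L, u k * v k := by rw [Finset.sum_range_succ]; ring
      _ ≤ min (m L) T * min (m L) S + ∑ i ∈ range L, u' i * v' i := by
          rw [hTe, hSe]; exact hineq
      _ ≤ min (m L) T * min (m L) S
            + ∑ k ∈ range L, uStar m L (T - m L) k * uStar m L (S - m L) k := by
          omega
      _ = ∑ k ∈ range (L+1), uStar m (L+1) T k * uStar m (L+1) S k := by
          rw [Finset.sum_range_succ, hlast, Finset.sum_congr rfl hrest]; ring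
lemma upset_comp {n : ℕ} (S T : Finset (Fin n))
    (hS : ∀ a ∈ S, ∀ b, a ≤ b → b ∈ S) (hT : ∀ a ∈ T, ∀ b, a ≤ b → b ∈ T) :
    S ⊆ T ∨ T ⊆ S := by
  by_cases h : S ⊆ T
  · exact Or.inl h
  · right
    intro b hb
    obtain ⟨a, haS, haT⟩ := Finset.not_subset.mp h
    rcases le_total a b with hab | hba
    · exact hS a haS b hab
    · exact absurd (hT b hb a hba) haT

section counts
variable {n q : ℕ} (c : Fin n → Fin q)

def mB (k : ℕ) : ℕ := (Finset.univ.filter (fun i => (c i : ℕ) = k)).card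

def NN (π : Equiv.Perm (Fin n)) (p k : ℕ) : ℕ :=
  (Finset.univ.filter (fun i => (c i : ℕ) = k ∧ p ≤ ((π i) : ℕ))).card

lemma NN_le_mB (π : Equiv.Perm (Fin n)) (p k : ℕ) : NN c π p k ≤ mB c k := by
  apply Finset.card_le_card
  intro i hi
  simp only [Finset.mem_filter] at hi ⊢
  exact ⟨hi.1, hi.2.1⟩

lemma NN_anti (π : Equiv.Perm (Fin n)) (p p' k : ℕ) (h : p ≤ p') : NN c π p' k ≤ NN c π p k := by
  apply Finset.card_le_card
  intro i hi
  simp only [Finset.mem_filter] at hi ⊢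
  exact ⟨hi.1, hi.2.1, le_trans h hi.2.2⟩

lemma card_ge (p : ℕ) : (Finset.univ.filter (fun x : Fin n => p ≤ (x : ℕ))).card = n - p := by
  rw [← Nat.card_Ico p n]
  apply Finset.card_nbij (i := fun (x : Fin n) => (x : ℕ))
  · intro a ha; simp at ha ⊢; have := a.isLt; omega
  · intro a ha b hb hab; exact Fin.val_injective hab
  · intro b hb; simp at hb ⊢; exact ⟨⟨b, hb.2⟩, hb.1, rfl⟩

lemma NN_sum (π : Equiv.Perm (Fin n)) (p : ℕ) : ∑ k ∈ range q, NN c π p k = n - p := by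
  have h1 : (Finset.univ.filter (fun i : Fin n => p ≤ ((π i) : ℕ))).card = n - p := by
    rw [← card_ge (n := n) p]
    apply Finset.card_bij (fun i _ => π i)
    · intro a ha; simp at ha ⊢; exact ha
    · intro a _ b _ hab; exact π.injective hab
    · intro b hb; simp at hb ⊢; exact ⟨π.symm b, by simpa using hb⟩
  rw [← h1]
  rw [Finset.card_eq_sum_card_fiberwise (f := fun i => (c i : ℕ)) (t := range q)
    (by intro x _; simp [(c x).isLt])]
  apply Finset.sum_congr rfl
  intro k _
  unfold NN
  congr 1
  rw [Finset.filter_filter]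
  apply Finset.filter_congr
  intro i _
  tauto

lemma mB_sum_Ico (k : ℕ) :
    (Finset.univ.filter (fun i : Fin n => k < (c i : ℕ))).card = ∑ l ∈ Ico (k+1) q, mB c l := by
  rw [Finset.card_eq_sum_card_fiberwise (f := fun i => (c i : ℕ)) (t := Ico (k+1) q)
    (by intro x hx; simp at hx ⊢; have := (c x).isLt; omega)]
  apply Finset.sum_congr rfl
  intro l hl
  simp only [Finset.mem_Ico] at hl
  unfold mB
  congr 1
  rw [Finset.filter_filter]
  apply Finset.filter_congr
  intro i _
  simp
  intro h
  omega

lemma NN_id (hc : Monotone c) (p k : ℕ) :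
    NN c (Equiv.refl (Fin n)) p k = uStar (mB c) q (n - p) k := by
  classical
  set Bk := Finset.univ.filter (fun i : Fin n => (c i : ℕ) = k) with hBk
  set P := Finset.univ.filter (fun x : Fin n => p ≤ (x : ℕ)) with hP
  set Ab := Finset.univ.filter (fun i : Fin n => k < (c i : ℕ)) with hAb
  set BA := Finset.univ.filter (fun i : Fin n => k ≤ (c i : ℕ)) with hBA
  have hPup : ∀ a ∈ P, ∀ b, a ≤ b → b ∈ P := by
    intro a ha b hab; simp [hP] at ha ⊢; have := Fin.le_def.mp hab; omega
  have hAbup : ∀ a ∈ Ab, ∀ b, a ≤ b → b ∈ Ab := by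
    intro a ha b hab; simp [hAb] at ha ⊢; have := Fin.le_def.mp (hc hab); omega
  have hBAup : ∀ a ∈ BA, ∀ b, a ≤ b → b ∈ BA := by
    intro a ha b hab; simp [hBA] at ha ⊢; have := Fin.le_def.mp (hc hab); omega
  have hdisj : Disjoint Bk Ab := by
    rw [Finset.disjoint_left]; intro a ha hb; simp [hBk] at ha; simp [hAb] at hb; omega
  have hunion : BA = Bk ∪ Ab := by
    ext i; simp [hBA, hBk, hAb]; omega
  have hNN : NN c (Equiv.refl (Fin n)) p k = (Bk ∩ P).card := by
    unfold NN
    congr 1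
    ext i
    simp [hBk, hP]
    exact Finset.mem_filter.trans (by simp)
  have hcardP : P.card = n - p := card_ge p
  have hcardAb : Ab.card = ∑ l ∈ Ico (k+1) q, mB c l := mB_sum_Ico c k
  have hgoal : (Bk ∩ P).card = min Bk.card (P.card - Ab.card) := by
    rcases upset_comp P Ab hPup hAbup with hPA | hAP
    · have h0 : Bk ∩ P = ∅ := by
        rw [Finset.eq_empty_iff_forall_notMem]
        intro i hi
        simp only [Finset.mem_inter] at hi
        have h2 := hPA hi.2
        have h1 := hi.1
        simp [hBk] at h1
        simp [hAb] at h2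
        omega
      have hle : P.card ≤ Ab.card := Finset.card_le_card hPA
      rw [h0]; simp; omega
    · rcases upset_comp P BA hPup hBAup with hPBA | hBAP
      · have heq : Bk ∩ P = P \ Ab := by
          ext i
          simp only [Finset.mem_inter, Finset.mem_sdiff]
          constructor
          · intro ⟨h1, h2⟩
            refine ⟨h2, ?_⟩
            simp [hBk] at h1; simp [hAb]; omega
          · intro ⟨h1, h2⟩
            refine ⟨?_, h1⟩
            have := hPBA h1
            simp [hBA] at this; simp [hAb] at h2; simp [hBk]; omega
        rw [heq, Finset.card_sdiff_of_subset hAP]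
        have : P.card - Ab.card ≤ Bk.card := by
          rw [← Finset.card_sdiff_of_subset hAP, ← heq]
          exact Finset.card_le_card Finset.inter_subset_left
        omega
      · have hBkP : Bk ⊆ P := by
          intro i hi
          apply hBAP
          rw [hunion]; exact Finset.mem_union_left _ hi
        have heq : Bk ∩ P = Bk := Finset.inter_eq_left.mpr hBkP
        have hcard : Bk.card + Ab.card ≤ P.card := by
          rw [← Finset.card_union_of_disjoint hdisj, ← hunion]
          exact Finset.card_le_card hBAP
        rw [heq]; omega
  rw [hNN, hgoal, hcardP, hcardAb]
  rfl

lemma mB_mono (hnormal : ∀ k l : Fin q, k ≤ l →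
      (Finset.univ.filter (fun i => c i = k)).card ≤
        (Finset.univ.filter (fun i => c i = l)).card)
    (i j : ℕ) (hij : i ≤ j) (hj : j < q) : mB c i ≤ mB c j := by
  have hi : i < q := by omega
  have := hnormal ⟨i, hi⟩ ⟨j, hj⟩ (by simp [Fin.le_def]; omega)
  unfold mB
  convert this using 2 <;> · ext x; simp [Fin.ext_iff]
end counts
lemma telescope (f : ℕ → ℝ) (y : ℕ) :
    ∑ i ∈ range (y+1), (f i - if i = 0 then 0 else f (i-1)) = f y := by
  induction y with
  | zero => simp
  | succ y ih => rw [Finset.sum_range_succ, ih]; simp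

section decomp
variable {n : ℕ} (A : Matrix (Fin n) (Fin n) ℝ)

def idx (hn : 0 < n) (p : ℕ) : Fin n := ⟨min p (n-1), by omega⟩

def DD (hn : 0 < n) (p q : ℕ) : ℝ :=
  A (idx hn p) (idx hn q) - (if p = 0 then 0 else A (idx hn (p-1)) (idx hn q))
    - (if q = 0 then 0 else A (idx hn p) (idx hn (q-1)))
    + (if p = 0 ∨ q = 0 then 0 else A (idx hn (p-1)) (idx hn (q-1)))

lemma idx_eq (hn : 0 < n) (x : Fin n) : idx hn (x : ℕ) = x := by
  apply Fin.ext; simp [idx]; omega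

lemma A_eq (hn : 0 < n) (x y : Fin n) : A x y =
    ∑ p ∈ range n, ∑ qq ∈ range n, DD A hn p qq
      * (if p ≤ (x : ℕ) then (1:ℝ) else 0) * (if qq ≤ (y : ℕ) then (1:ℝ) else 0) := by
  have hx : (x : ℕ) + 1 ≤ n := x.isLt
  have hy : (y : ℕ) + 1 ≤ n := y.isLt
  rw [← Finset.sum_subset (Finset.range_subset_range.mpr hx)
    (fun p _ hp => by
      rw [if_neg (by simp at hp; omega)]
      simp)]
  have hinner : ∀ p ∈ range ((x:ℕ)+1),
      (∑ qq ∈ range n, DD A hn p qq * (if p ≤ (x : ℕ) then (1:ℝ) else 0) * (if qq ≤ (y : ℕ) then (1:ℝ) else 0))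
        = ∑ qq ∈ range ((y:ℕ)+1), DD A hn p qq := by
    intro p hp
    simp only [Finset.mem_range] at hp
    rw [← Finset.sum_subset (Finset.range_subset_range.mpr hy)
      (fun qq _ hqq => by
        have h : ¬ (qq ≤ (y:ℕ)) := by simp at hqq; omega
        rw [if_neg h]; simp)]
    apply Finset.sum_congr rfl
    intro qq hqq
    simp only [Finset.mem_range] at hqq
    rw [if_pos (by omega), if_pos (by omega), mul_one, mul_one]
  rw [Finset.sum_congr rfl hinner]
  have hin2 : ∀ p ∈ range ((x:ℕ)+1), ∑ qq ∈ range ((y:ℕ)+1), DD A hn p qq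
      = (fun p => A (idx hn p) (idx hn (y:ℕ)) - if p = 0 then 0 else A (idx hn (p-1)) (idx hn (y:ℕ))) p := by
    intro p _
    have : ∀ qq, DD A hn p qq =
        (fun qq => A (idx hn p) (idx hn qq) - if p = 0 then 0 else A (idx hn (p-1)) (idx hn qq)) qq
          - if qq = 0 then 0 else (fun qq => A (idx hn p) (idx hn qq) - if p = 0 then 0 else A (idx hn (p-1)) (idx hn qq)) (qq - 1) := by
      intro qq
      simp only [DD]
      by_cases hp : p = 0 <;> by_cases hq : qq = 0 <;> simp [hp, hq] <;> ring
    rw [Finset.sum_congr rfl (fun qq _ => this qq), telescope]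
  rw [Finset.sum_congr rfl hin2, telescope]
  simp [idx_eq]

lemma DD_nonneg (hn : 0 < n) (hnonneg : ∀ i j, 0 ≤ A i j)
    (hmono : ∀ i j k l : Fin n, i ≤ k → j ≤ l → A i j ≤ A k l)
    (hAM : ∀ i r j s : Fin n, i < r → j < s → A i s + A r j ≤ A i j + A r s)
    (p q : ℕ) : 0 ≤ DD A hn p q := by
  simp only [DD]
  by_cases hp : p = 0 <;> by_cases hq : q = 0
  · simp [hp, hq]; exact hnonneg _ _
  · rw [if_pos hp, if_neg hq, if_pos (Or.inl hp)]
    have h := hmono (idx hn p) (idx hn (q-1)) (idx hn p) (idx hn q)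
      (le_refl _) (by simp [idx, Fin.le_def]; try omega)
    linarith
  · rw [if_neg hp, if_pos hq, if_pos (Or.inr hq)]
    have h := hmono (idx hn (p-1)) (idx hn q) (idx hn p) (idx hn q)
      (by simp [idx, Fin.le_def]; try omega) (le_refl _)
    linarith
  · rw [if_neg hp, if_neg hq, if_neg (by tauto)]
    rcases le_or_gt p (n-1) with hpn | hpn
    · rcases le_or_gt q (n-1) with hqn | hqn
      · have h := hAM (idx hn (p-1)) (idx hn p) (idx hn (q-1)) (idx hn q)
          (by simp [idx, Fin.lt_def]; try omega) (by simp [idx, Fin.lt_def]; try omega)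
        linarith
      · have heq : idx hn q = idx hn (q-1) := by apply Fin.ext; simp [idx]; omega
        rw [heq]
        have h := hmono (idx hn (p-1)) (idx hn (q-1)) (idx hn p) (idx hn (q-1))
          (by simp [idx, Fin.le_def]; try omega) (le_refl _)
        linarith
    · have heq : idx hn p = idx hn (p-1) := by apply Fin.ext; simp [idx]; omega
      rw [heq]
      have h := hmono (idx hn (p-1)) (idx hn (q-1)) (idx hn (p-1)) (idx hn q)
        (le_refl _) (by simp [idx, Fin.le_def]; try omega)
      linarith
end decomp
section main

lemma count_ineq_aux {n q : ℕ} (c : Fin n → Fin q) (hc : Monotone c)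
    (hnormal : ∀ k l : Fin q, k ≤ l →
      (Finset.univ.filter (fun i => c i = k)).card ≤
        (Finset.univ.filter (fun i => c i = l)).card)
    (π : Equiv.Perm (Fin n)) (p qq : ℕ) (hpq : p ≤ qq) :
    ∑ k ∈ range q, NN c π p k * NN c π qq k ≤
      ∑ k ∈ range q, NN c (Equiv.refl (Fin n)) p k * NN c (Equiv.refl (Fin n)) qq k := by
  calc ∑ k ∈ range q, NN c π p k * NN c π qq k
      ≤ ∑ k ∈ range q, uStar (mB c) q (∑ k ∈ range q, NN c π p k) k
          * uStar (mB c) q (∑ k ∈ range q, NN c π qq k) k :=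
        key q (mB c) (NN c π p) (NN c π qq)
          (fun i _ => NN_anti c π p qq i hpq)
          (fun i _ => NN_le_mB c π p i)
          (fun i j hij hj => mB_mono c hnormal i j hij hj)
    _ = ∑ k ∈ range q, NN c (Equiv.refl (Fin n)) p k * NN c (Equiv.refl (Fin n)) qq k := by
        rw [NN_sum, NN_sum]
        exact (Finset.sum_congr rfl fun k _ => by rw [NN_id c hc, NN_id c hc]).symm

lemma count_ineq {n q : ℕ} (c : Fin n → Fin q) (hc : Monotone c)
    (hnormal : ∀ k l : Fin q, k ≤ l →
      (Finset.univ.filter (fun i => c i = k)).card ≤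
        (Finset.univ.filter (fun i => c i = l)).card)
    (π : Equiv.Perm (Fin n)) (p qq : ℕ) :
    ∑ k ∈ range q, NN c π p k * NN c π qq k ≤
      ∑ k ∈ range q, NN c (Equiv.refl (Fin n)) p k * NN c (Equiv.refl (Fin n)) qq k := by
  rcases le_total p qq with h | h
  · exact count_ineq_aux c hc hnormal π p qq h
  · have := count_ineq_aux c hc hnormal π qq p h
    calc ∑ k ∈ range q, NN c π p k * NN c π qq k
        = ∑ k ∈ range q, NN c π qq k * NN c π p k := Finset.sum_congr rfl fun k _ => Nat.mul_comm _ _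
      _ ≤ ∑ k ∈ range q, NN c (Equiv.refl (Fin n)) qq k * NN c (Equiv.refl (Fin n)) p k := this
      _ = _ := Finset.sum_congr rfl fun k _ => Nat.mul_comm _ _

lemma swap4 {α β γ δ : Type*} (s : Finset α) (t : Finset β) (u : Finset γ) (v : Finset δ)
    (f : α → β → γ → δ → ℝ) :
    ∑ i ∈ s, ∑ j ∈ t, ∑ p ∈ u, ∑ r ∈ v, f i j p r
      = ∑ p ∈ u, ∑ r ∈ v, ∑ i ∈ s, ∑ j ∈ t, f i j p r := by
  calc ∑ i ∈ s, ∑ j ∈ t, ∑ p ∈ u, ∑ r ∈ v, f i j p r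
      = ∑ i ∈ s, ∑ p ∈ u, ∑ j ∈ t, ∑ r ∈ v, f i j p r :=
        Finset.sum_congr rfl (fun i _ => Finset.sum_comm)
    _ = ∑ p ∈ u, ∑ i ∈ s, ∑ j ∈ t, ∑ r ∈ v, f i j p r := Finset.sum_comm
    _ = ∑ p ∈ u, ∑ i ∈ s, ∑ r ∈ v, ∑ j ∈ t, f i j p r :=
        Finset.sum_congr rfl (fun p _ => Finset.sum_congr rfl (fun i _ => Finset.sum_comm))
    _ = ∑ p ∈ u, ∑ r ∈ v, ∑ i ∈ s, ∑ j ∈ t, f i j p r :=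
        Finset.sum_congr rfl (fun p _ => Finset.sum_comm)

lemma swap3 {α γ δ : Type*} (s : Finset α) (u : Finset γ) (v : Finset δ)
    (f : α → γ → δ → ℝ) :
    ∑ i ∈ s, ∑ p ∈ u, ∑ r ∈ v, f i p r = ∑ p ∈ u, ∑ r ∈ v, ∑ i ∈ s, f i p r := by
  calc ∑ i ∈ s, ∑ p ∈ u, ∑ r ∈ v, f i p r
      = ∑ p ∈ u, ∑ i ∈ s, ∑ r ∈ v, f i p r := Finset.sum_comm
    _ = ∑ p ∈ u, ∑ r ∈ v, ∑ i ∈ s, f i p r :=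
        Finset.sum_congr rfl (fun p _ => Finset.sum_comm)

lemma indicator_sum {n q : ℕ} (c : Fin n → Fin q) (σ : Equiv.Perm (Fin n)) (p k : ℕ) :
    ∑ i ∈ Finset.univ.filter (fun i : Fin n => (c i : ℕ) = k),
        (if p ≤ ((σ i) : ℕ) then (1:ℝ) else 0) = (NN c σ p k : ℝ) := by
  rw [Finset.sum_boole]
  unfold NN
  rw [Finset.filter_filter]

lemma W_eq {n q : ℕ} (hn : 0 < n) (A : Matrix (Fin n) (Fin n) ℝ) (c : Fin n → Fin q)
    (σ : Equiv.Perm (Fin n)) :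
    (∑ i, ∑ j, if c i = c j then A (σ i) (σ j) else 0)
      = ∑ p ∈ range n, ∑ qq ∈ range n, DD A hn p qq
          * (∑ k ∈ range q, (NN c σ p k : ℝ) * (NN c σ qq k : ℝ)) := by
  classical
  have step1 : (∑ i, ∑ j, if c i = c j then A (σ i) (σ j) else 0)
      = ∑ k ∈ range q, ∑ i ∈ Finset.univ.filter (fun i : Fin n => (c i : ℕ) = k),
          ∑ j ∈ Finset.univ.filter (fun j : Fin n => (c j : ℕ) = k), A (σ i) (σ j) := by
    rw [← Finset.sum_fiberwise_of_maps_to (g := fun i : Fin n => (c i : ℕ)) (t := range q)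
      (fun x _ => by simp [(c x).isLt])]
    apply Finset.sum_congr rfl
    intro k _
    apply Finset.sum_congr rfl
    intro i hi
    simp only [Finset.mem_filter] at hi
    rw [← Finset.sum_filter]
    apply Finset.sum_congr _ (fun j _ => rfl)
    ext j
    simp only [Finset.mem_filter, Finset.mem_univ, true_and]
    rw [Fin.ext_iff]
    omega
  rw [step1]
  have step2 : ∀ k ∈ range q,
      (∑ i ∈ Finset.univ.filter (fun i : Fin n => (c i : ℕ) = k),
          ∑ j ∈ Finset.univ.filter (fun j : Fin n => (c j : ℕ) = k), A (σ i) (σ j))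
        = ∑ p ∈ range n, ∑ qq ∈ range n, DD A hn p qq * (NN c σ p k : ℝ) * (NN c σ qq k : ℝ) := by
    intro k _
    set Bk := Finset.univ.filter (fun i : Fin n => (c i : ℕ) = k) with hBkdef
    calc ∑ i ∈ Bk, ∑ j ∈ Bk, A (σ i) (σ j)
        = ∑ i ∈ Bk, ∑ j ∈ Bk, ∑ p ∈ range n, ∑ qq ∈ range n, DD A hn p qq
            * (if p ≤ ((σ i) : ℕ) then (1:ℝ) else 0) * (if qq ≤ ((σ j) : ℕ) then (1:ℝ) else 0) := by
          apply Finset.sum_congr rfl; intro i _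
          apply Finset.sum_congr rfl; intro j _
          exact A_eq A hn (σ i) (σ j)
      _ = ∑ p ∈ range n, ∑ qq ∈ range n, ∑ i ∈ Bk, ∑ j ∈ Bk, DD A hn p qq
            * (if p ≤ ((σ i) : ℕ) then (1:ℝ) else 0) * (if qq ≤ ((σ j) : ℕ) then (1:ℝ) else 0) :=
          swap4 _ _ _ _ _
      _ = ∑ p ∈ range n, ∑ qq ∈ range n, DD A hn p qq * (NN c σ p k : ℝ) * (NN c σ qq k : ℝ) := by
          apply Finset.sum_congr rfl; intro p _
          apply Finset.sum_congr rfl; intro qq _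
          rw [← indicator_sum c σ p k, ← indicator_sum c σ qq k, ← hBkdef]
          conv_rhs => rw [mul_assoc, Finset.sum_mul_sum, Finset.mul_sum]
          apply Finset.sum_congr rfl; intro i _
          rw [Finset.mul_sum]
          apply Finset.sum_congr rfl; intro j _
          ring
  rw [Finset.sum_congr rfl step2, swap3]
  apply Finset.sum_congr rfl; intro p _
  apply Finset.sum_congr rfl; intro qq _
  rw [Finset.mul_sum]
  apply Finset.sum_congr rfl; intro k _
  ring

lemma Z_eq {n q : ℕ} (A B : Matrix (Fin n) (Fin n) ℝ) (c : Fin n → Fin q)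
    (hB : ∀ i j, B i j = if c i = c j then (0 : ℝ) else 1) (σ : Equiv.Perm (Fin n)) :
    Z A B σ = (∑ i, ∑ j, A i j) - ∑ i, ∑ j, (if c i = c j then A (σ i) (σ j) else 0) := by
  unfold Z
  have h1 : ∀ i j : Fin n, A (σ i) (σ j) * B i j
      = A (σ i) (σ j) - (if c i = c j then A (σ i) (σ j) else 0) := by
    intro i j; rw [hB]; by_cases h : c i = c j <;> simp [h]
  have h2 : ∑ i, ∑ j, A (σ i) (σ j) * B i j
      = (∑ i, ∑ j, A (σ i) (σ j)) - ∑ i, ∑ j, (if c i = c j then A (σ i) (σ j) else 0) := by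
    rw [← Finset.sum_sub_distrib]
    apply Finset.sum_congr rfl; intro i _
    rw [← Finset.sum_sub_distrib]
    apply Finset.sum_congr rfl; intro j _
    exact h1 i j
  rw [h2]
  congr 1
  calc ∑ i, ∑ j, A (σ i) (σ j)
      = ∑ i, ∑ j, A i (σ j) := Equiv.sum_comp σ (fun x => ∑ j, A x (σ j))
    _ = ∑ i, ∑ j, A i j := Finset.sum_congr rfl (fun i _ => Equiv.sum_comp σ (A i))

theorem stmt17 {n q : ℕ} (A B : Matrix (Fin n) (Fin n) ℝ)
    (hsym : A.IsSymm)
    (hnonneg : ∀ i j, 0 ≤ A i j)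
    (hmono : ∀ i j k l : Fin n, i ≤ k → j ≤ l → A i j ≤ A k l)
    (hAM : ∀ i r j s : Fin n, i < r → j < s → A i s + A r j ≤ A i j + A r s)
    (c : Fin n → Fin q) (hc : Monotone c)
    (hB : ∀ i j, B i j = if c i = c j then (0 : ℝ) else 1)
    (hnormal : ∀ k l : Fin q, k ≤ l →
      (Finset.univ.filter (fun i => c i = k)).card ≤
        (Finset.univ.filter (fun i => c i = l)).card) :
    ∀ π : Equiv.Perm (Fin n), Z A B (Equiv.refl (Fin n)) ≤ Z A B π := by
  intro π
  rcases Nat.eq_zero_or_pos n with hn0 | hn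
  · subst hn0
    simp [Z]
  rw [Z_eq A B c hB π, Z_eq A B c hB (Equiv.refl (Fin n))]
  apply sub_le_sub_left
  rw [W_eq hn A c π, W_eq hn A c (Equiv.refl (Fin n))]
  apply Finset.sum_le_sum
  intro p hp
  apply Finset.sum_le_sum
  intro qq hqq
  apply mul_le_mul_of_nonneg_left _ (DD_nonneg A hn hnonneg hmono hAM p qq)
  have hnat := count_ineq c hc hnormal π p qq
  calc ∑ k ∈ range q, (NN c π p k : ℝ) * (NN c π qq k : ℝ)
      = ((∑ k ∈ range q, NN c π p k * NN c π qq k : ℕ) : ℝ) := by push_cast; rfl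
    _ ≤ ((∑ k ∈ range q, NN c (Equiv.refl (Fin n)) p k * NN c (Equiv.refl (Fin n)) qq k : ℕ) : ℝ) := by
        exact_mod_cast hnat
    _ = ∑ k ∈ range q, (NN c (Equiv.refl (Fin n)) p k : ℝ) * (NN c (Equiv.refl (Fin n)) qq k : ℝ) := by
        push_cast; rfl

end main
end

section
/- If A is a symmetric anti-Monge matrix (not necessarily monotone) and B is a multi-cut matrix all of whose q blocks have identical size n/q, then the identity permutation minimizes Z_π(A,B) over all permutations π. -/
open Finset

lemma filter_lt_range (m w : ℕ) (h : w ≤ m) : (range m).filter (fun v => v < w) = range w := by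
  ext a; simp; omega

lemma sum_min_greedy (m P : ℕ) : ∀ C, ∑ k ∈ range C, min m (P - k*m) = min P (C*m) := by
  intro C
  induction C with
  | zero => simp
  | succ C ih =>
    rw [Finset.sum_range_succ, ih]
    have : (C+1)*m = C*m + m := by ring
    omega

lemma layer_mul (m : ℕ) (w : ℕ) (hw : w ≤ m) (c : ℕ) :
    c * w = ∑ v ∈ range m, (if v < w then c else 0) := by
  rw [← Finset.sum_filter, filter_lt_range m w hw, Finset.sum_const, card_range, smul_eq_mul,
    mul_comm]

lemma LIN (m P A n : ℕ) :
    ((min P (m*n) : ℕ) : ℤ) ≤ ((min P (m*A) : ℕ) : ℤ)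
      + (((min P (m*A + m) : ℕ) : ℤ) - ((min P (m*A) : ℕ) : ℤ)) * ((n:ℤ) - A) := by
  have hgn1 : ((min P (m*n):ℕ):ℤ) ≤ P := by exact_mod_cast min_le_left P (m*n)
  have hgn2 : ((min P (m*n):ℕ):ℤ) ≤ (m:ℤ)*n := by exact_mod_cast min_le_right P (m*n)
  rcases le_or_gt n A with h | h
  · have hnat : m*n + m*(A-n) = m*A := by rw [← Nat.mul_add]; congr 1; omega
    have huz : (m:ℤ)*n + m*((A-n:ℕ):ℤ) = m*A := by exact_mod_cast hnat
    have ht2 : ((n:ℤ) - A) = -((A-n : ℕ) : ℤ) := by omega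
    rw [ht2]
    rcases le_or_gt P (m*A) with hP | hP
    · have e1 : min P (m*A) = P := by omega
      have e2 : min P (m*A+m) = P := by omega
      rw [e1, e2]; simp
    · have e1 : min P (m*A) = m*A := by omega
      have hd2 : ((min P (m*A+m):ℕ):ℤ) - ((min P (m*A):ℕ):ℤ) ≤ m := by omega
      have key : (((min P (m*A+m):ℕ):ℤ) - ((min P (m*A):ℕ):ℤ)) * ((A-n : ℕ):ℤ) ≤ m * ((A-n:ℕ):ℤ) :=
        mul_le_mul_of_nonneg_right hd2 (by positivity)
      have e1z : ((min P (m*A):ℕ):ℤ) = (m:ℤ)*A := by exact_mod_cast congrArg (Nat.cast : ℕ → ℤ) e1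
      rw [e1z] at key ⊢
      nlinarith
  · have hnat : m*A + m*(n-A) = m*n := by rw [← Nat.mul_add]; congr 1; omega
    have huz : (m:ℤ)*A + m*((n-A:ℕ):ℤ) = m*n := by exact_mod_cast hnat
    have ht2 : ((n:ℤ) - A) = ((n-A : ℕ) : ℤ) := by omega
    have htpos : (1:ℤ) ≤ ((n-A:ℕ):ℤ) := by omega
    rw [ht2]
    rcases le_or_gt P (m*A) with hP | hP
    · have e1 : min P (m*A) = P := by omega
      have e2 : min P (m*A+m) = P := by omega
      rw [e1, e2]; simpa using hgn1
    · have e1z : ((min P (m*A):ℕ):ℤ) = (m:ℤ)*A := by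
        have e1 : min P (m*A) = m*A := by omega
        exact_mod_cast congrArg (Nat.cast : ℕ → ℤ) e1
      rcases le_or_gt P (m*A + m) with hQ | hQ
      · have e2 : ((min P (m*A+m):ℕ):ℤ) = P := by
          have : min P (m*A+m) = P := by omega
          exact_mod_cast congrArg (Nat.cast : ℕ → ℤ) this
        rw [e1z, e2]
        have hfac : (0:ℤ) ≤ ((P:ℤ) - m*A) * (((n-A:ℕ):ℤ) - 1) := by
          apply mul_nonneg <;> omega
        nlinarith
      · have e2 : ((min P (m*A+m):ℕ):ℤ) = (m:ℤ)*A + m := by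
          rw [show min P (m*A+m) = m*A+m by omega]; push_cast; ring
        rw [e1z, e2]
        nlinarith

lemma downset (p : ℕ → Prop) [DecidablePred p] (q : ℕ)
    (mono : ∀ a b, a ≤ b → p b → p a) :
    (range q).filter p = range (((range q).filter p).card) := by
  apply Finset.Subset.antisymm
  · intro a ha
    simp only [mem_filter, mem_range] at ha
    have hsub : range (a+1) ⊆ (range q).filter p := by
      intro b hb
      simp only [mem_range] at hb
      simp only [mem_filter, mem_range]
      refine ⟨?_, mono b a (by omega) ha.2⟩
      omega
    have := Finset.card_le_card hsub
    simp only [card_range] at this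
    simp only [mem_range]; omega
  · intro a ha
    simp only [mem_range] at ha
    by_contra hna
    have hq : ((range q).filter p).card ≤ q := by
      have := Finset.card_le_card (Finset.filter_subset p (range q))
      simpa using this
    rcases lt_or_ge a q with haq | haq
    · have hpa : ¬ p a := by
        intro hpa; exact hna (by simp [mem_filter, mem_range, haq, hpa])
      have hsub : (range q).filter p ⊆ range a := by
        intro b hb
        simp only [mem_filter, mem_range] at hb
        simp only [mem_range]
        rcases lt_or_ge b a with h' | h'
        · exact h'
        · exact absurd (mono a b h' hb.2) hpa
      have := Finset.card_le_card hsub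
      simp only [card_range] at this; omega
    · omega

lemma core (m q : ℕ) (hm : 0 < m) (x y : Fin q → ℕ) (hx : ∀ k, x k ≤ m) (hy : ∀ k, y k ≤ m) :
    ∑ k, x k * y k ≤
      ∑ k : Fin q, min m ((∑ k', x k') - k.val*m) * min m ((∑ k', y k') - k.val*m) := by
  set P := ∑ k', x k' with hP
  set S := ∑ k', y k' with hS
  have hSq : S ≤ q*m := by
    calc S ≤ ∑ _k : Fin q, m := Finset.sum_le_sum (fun k _ => hy k)
    _ = q*m := by simp [mul_comm]
  set A := S / m with hA
  set B := S % m with hB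
  have hSm : S = A*m + B := by
    rw [hA, hB]; exact (Nat.div_add_mod' S m).symm
  have hBm : B < m := Nat.mod_lt _ hm
  have hAq : A ≤ q := by
    have h1 : A*m ≤ q*m := by omega
    exact Nat.le_of_mul_le_mul_right h1 hm
  set N : ℕ → ℕ := fun v => (univ.filter (fun k => v < y k)).card with hN
  have L1 : ∑ k, x k * y k = ∑ v ∈ range m, ∑ k, (if v < y k then x k else 0) := by
    rw [Finset.sum_comm]
    exact Finset.sum_congr rfl fun k _ => layer_mul m (y k) (hy k) (x k)
  have L2 : ∀ v, (∑ k, if v < y k then x k else 0) ≤ min P (m * N v) := by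
    intro v
    apply le_min
    · rw [hP]
      exact Finset.sum_le_sum fun k _ => by split <;> omega
    · calc (∑ k, if v < y k then x k else 0) ≤ ∑ k, (if v < y k then m else 0) :=
        Finset.sum_le_sum fun k _ => by split; exacts [hx k, le_rfl]
      _ = m * N v := by
        rw [← Finset.sum_filter, Finset.sum_const, smul_eq_mul, hN, mul_comm]
  have L3 : ∑ v ∈ range m, N v = S := by
    have h1 : ∀ v, N v = ∑ k : Fin q, (if v < y k then 1 else 0) := by
      intro v; rw [hN]; exact Finset.card_filter _ _
    rw [Finset.sum_congr rfl fun v _ => h1 v, Finset.sum_comm]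
    exact Finset.sum_congr rfl fun k _ => (by simpa using (layer_mul m (y k) (hy k) 1).symm)
  set D : ℕ → ℕ := fun v => ((range q).filter (fun k => k*m + v < S)).card with hD
  have R1 : (∑ k : Fin q, min m (P - k.val*m) * min m (S - k.val*m))
      = ∑ v ∈ range m, min P (D v * m) := by
    rw [Fin.sum_univ_eq_sum_range (fun k => min m (P - k*m) * min m (S - k*m)) q]
    have e1 : ∀ k ∈ range q, min m (P - k*m) * min m (S - k*m)
        = ∑ v ∈ range m, (if v < min m (S - k*m) then min m (P - k*m) else 0) :=
      fun k _ => layer_mul m _ (min_le_left _ _) _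
    rw [Finset.sum_congr rfl e1, Finset.sum_comm]
    refine Finset.sum_congr rfl fun v hv => ?_
    have hvm : v < m := mem_range.mp hv
    have e2 : ∀ k ∈ range q, (if v < min m (S - k*m) then min m (P - k*m) else 0)
        = (if k*m + v < S then min m (P - k*m) else 0) := by
      intro k _
      congr 1
      rw [eq_iff_iff]
      omega
    rw [Finset.sum_congr rfl e2, ← Finset.sum_filter]
    have hmono : ∀ a b : ℕ, a ≤ b → (b*m + v < S) → (a*m + v < S) := by
      intro a b hab hb
      have : a*m ≤ b*m := Nat.mul_le_mul_right m hab
      omega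
    rw [downset _ q hmono, sum_min_greedy]
  have R2 : ∀ v ∈ range m, D v = (if v < B then A + 1 else A) := by
    intro v hv
    have hvm : v < m := mem_range.mp hv
    have key : (range q).filter (fun k => k*m + v < S) = range (if v < B then A + 1 else A) := by
      ext a
      simp only [mem_filter, mem_range]
      rcases lt_or_ge v B with hvB | hvB
      · simp only [if_pos hvB]
        constructor
        · rintro ⟨_, hav⟩
          by_contra hcon
          have h1 : (A+1)*m ≤ a*m := Nat.mul_le_mul_right m (by omega)
          have h2 : (A+1)*m = A*m + m := by ring
          omega
        · intro ha
          have h1 : a*m ≤ A*m := Nat.mul_le_mul_right m (by omega)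
          have hAq' : A < q := by
            by_contra hq'
            have : q*m ≤ A*m := Nat.mul_le_mul_right m (by omega)
            omega
          exact ⟨by omega, by omega⟩
      · simp only [if_neg (by omega : ¬ v < B)]
        constructor
        · rintro ⟨_, hav⟩
          by_contra hcon
          have h1 : A*m ≤ a*m := Nat.mul_le_mul_right m (by omega)
          omega
        · intro ha
          have h1 : (a+1)*m ≤ A*m := Nat.mul_le_mul_right m (by omega)
          have h2 : (a+1)*m = a*m + m := by ring
          exact ⟨by omega, by omega⟩
    simp only [hD]
    rw [key, card_range]
  -- final chain via ℤ (discrete Jensen)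
  have main : ∑ v ∈ range m, ((min P (m * N v) : ℕ) : ℤ)
      ≤ ∑ v ∈ range m, ((min P (D v * m) : ℕ) : ℤ) := by
    have sumN : ∑ v ∈ range m, ((N v : ℕ):ℤ) = (S:ℤ) := by
      rw [← Nat.cast_sum, L3]
    set g1 : ℤ := ((min P (m*A) : ℕ) : ℤ) with hg1
    set g2 : ℤ := ((min P (m*A + m) : ℕ) : ℤ) with hg2
    have hSz : (S:ℤ) = (A:ℤ)*m + B := by exact_mod_cast hSm
    have hub : ∑ v ∈ range m, ((min P (m * N v) : ℕ) : ℤ) ≤ (m:ℤ)*g1 + (g2 - g1)*B := by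
      calc ∑ v ∈ range m, ((min P (m * N v) : ℕ) : ℤ)
          ≤ ∑ v ∈ range m, (g1 + (g2 - g1) * ((N v : ℤ) - A)) :=
          Finset.sum_le_sum fun v _ => LIN m P A (N v)
        _ = (m:ℤ)*g1 + (g2-g1) * ((∑ v ∈ range m, ((N v:ℕ):ℤ)) - m*A) := by
            rw [Finset.sum_add_distrib, Finset.sum_const, card_range, ← Finset.mul_sum,
              Finset.sum_sub_distrib, Finset.sum_const, card_range]
            push_cast; ring
        _ = (m:ℤ)*g1 + (g2-g1)*B := by rw [sumN, hSz]; ring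
    have hrb : ∑ v ∈ range m, ((min P (D v * m) : ℕ) : ℤ) = (B:ℤ)*g2 + ((m:ℤ)-B)*g1 := by
      have e : ∀ v ∈ range m, ((min P (D v * m):ℕ):ℤ) = (if v < B then g2 else g1) := by
        intro v hv
        rw [R2 v hv]
        rcases lt_or_ge v B with h | h
        · rw [if_pos h, if_pos h, show (A+1)*m = m*A + m by ring]
        · rw [if_neg (by omega), if_neg (by omega), show A*m = m*A by ring]
      rw [Finset.sum_congr rfl e, Finset.sum_ite, Finset.sum_const, Finset.sum_const,
        filter_lt_range m B hBm.le, card_range]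
      have hcard : ((range m).filter (fun v => ¬ v < B)).card = m - B := by
        have : (range m).filter (fun v => ¬ v < B) = Ico B m := by
          ext a; simp; omega
        rw [this, Nat.card_Ico]
      rw [hcard, nsmul_eq_mul, nsmul_eq_mul,
        show ((m-B:ℕ):ℤ) = (m:ℤ)-(B:ℤ) by omega]
    rw [hrb]
    calc _ ≤ (m:ℤ)*g1 + (g2 - g1)*B := hub
      _ = (B:ℤ)*g2 + ((m:ℤ)-B)*g1 := by ring
  calc ∑ k, x k * y k = ∑ v ∈ range m, ∑ k, (if v < y k then x k else 0) := L1
    _ ≤ ∑ v ∈ range m, min P (m * N v) := Finset.sum_le_sum fun v _ => L2 v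
    _ ≤ ∑ v ∈ range m, min P (D v * m) := by exact_mod_cast main
    _ = ∑ k : Fin q, min m (P - k.val*m) * min m (S - k.val*m) := R1.symm

section Struct
variable {n q m : ℕ} (c : Fin n → Fin q)

lemma card_val_filter (p : ℕ → Prop) [DecidablePred p] :
    (univ.filter (fun i : Fin n => p i.val)).card = ((range n).filter p).card := by
  rw [Finset.card_filter, Finset.card_filter,
    ← Fin.sum_univ_eq_sum_range (fun a => if p a then 1 else 0) n]

variable (hc : Monotone c) (hsize' : ∀ k : Fin q, (univ.filter (fun i => c i = k)).card = m)
  (hnm : q * m = n)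

include hc hsize' in
lemma card_le_fiber (k : Fin q) :
    (univ.filter (fun j : Fin n => c j ≤ k)).card = (k.val + 1) * m := by
  rw [Finset.card_eq_sum_card_fiberwise
    (f := c) (t := univ.filter (fun j : Fin q => j ≤ k))
    (fun x hx => by simpa using (mem_filter.mp hx).2)]
  have e : ∀ b ∈ univ.filter (fun j : Fin q => j ≤ k),
      ((univ.filter (fun j : Fin n => c j ≤ k)).filter (fun j => c j = b))
        = univ.filter (fun j : Fin n => c j = b) := by
    intro b hb
    have hbk : b ≤ k := by simpa using hb
    ext j
    simp only [mem_filter, mem_univ, true_and, filter_filter]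
    constructor
    · rintro ⟨_, h⟩; exact h
    · intro h; exact ⟨h ▸ hbk, h⟩
  have e' : ∀ b ∈ univ.filter (fun j : Fin q => j ≤ k),
      ((univ.filter (fun j : Fin n => c j ≤ k)).filter (fun j => c j = b)).card = m := by
    intro b hb
    rw [e b hb]; exact hsize' b
  rw [Finset.sum_congr rfl e', Finset.sum_const, smul_eq_mul]
  congr 1
  have hfe : univ.filter (fun j : Fin q => j ≤ k) = univ.filter (fun j : Fin q => j.val ≤ k.val) := by
    ext j; simp only [mem_filter, mem_univ, true_and, Fin.le_def]
  rw [hfe, card_val_filter (fun a => a ≤ k.val)]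
  have : (range q).filter (fun a => a ≤ k.val) = range (k.val + 1) := by
    ext a; simp; have := k.isLt; omega
  rw [this, card_range]

include hc hsize' in
lemma le_iff_lt_mul (k : Fin q) (i : Fin n) : c i ≤ k ↔ i.val < (k.val + 1) * m := by
  constructor
  · intro hik
    have hsub : univ.filter (fun j : Fin n => j ≤ i) ⊆ univ.filter (fun j : Fin n => c j ≤ k) := by
      intro j hj
      simp only [mem_filter, mem_univ, true_and] at hj ⊢
      exact le_trans (hc hj) hik
    have hcard := Finset.card_le_card hsub
    rw [card_le_fiber c hc hsize'] at hcard
    have : (univ.filter (fun j : Fin n => j ≤ i)).card = i.val + 1 := by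
      have hfe : univ.filter (fun j : Fin n => j ≤ i) = univ.filter (fun j : Fin n => j.val ≤ i.val) := by
        ext j; simp only [mem_filter, mem_univ, true_and, Fin.le_def]
      rw [hfe, card_val_filter (fun a => a ≤ i.val)]
      have : (range n).filter (fun a => a ≤ i.val) = range (i.val + 1) := by
        ext a; simp; have := i.isLt; omega
      rw [this, card_range]
    omega
  · intro h
    by_contra hik
    have hki : k < c i := lt_of_not_ge hik
    have hsub : univ.filter (fun j : Fin n => c j ≤ k) ⊆ univ.filter (fun j : Fin n => j.val < i.val) := by
      intro j hj
      simp only [mem_filter, mem_univ, true_and] at hj ⊢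
      rcases lt_or_ge j.val i.val with h' | h'
      · exact h'
      · exact absurd (le_trans (hc (by exact h' : i ≤ j)) hj) (not_le.mpr hki)
    have hcard := Finset.card_le_card hsub
    rw [card_le_fiber c hc hsize'] at hcard
    have : (univ.filter (fun j : Fin n => j.val < i.val)).card = i.val := by
      rw [card_val_filter (fun a => a < i.val)]
      have : (range n).filter (fun a => a < i.val) = range i.val := by
        ext a; simp; have := i.isLt; omega
      rw [this, card_range]
    omega

include hc hsize' in
lemma struct (i : Fin n) (k : Fin q) :
    c i = k ↔ (k.val * m ≤ i.val ∧ i.val < k.val * m + m) := by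
  constructor
  · rintro rfl
    have hup : i.val < ((c i).val + 1) * m := (le_iff_lt_mul c hc hsize' (c i) i).mp le_rfl
    constructor
    · rcases Nat.eq_zero_or_pos (c i).val with h0 | hpos
      · rw [h0]; omega
      · set k' : Fin q := ⟨(c i).val - 1, by have := (c i).isLt; omega⟩ with hk'
        have hnle : ¬ c i ≤ k' := by
          rw [Fin.le_def]; simp [hk']; omega
        have := (le_iff_lt_mul c hc hsize' k' i).mpr
        have hlow : ¬ i.val < (k'.val + 1) * m := fun hcon => hnle (by
          exact (le_iff_lt_mul c hc hsize' k' i).mpr hcon)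
        have : (k'.val + 1) = (c i).val := by simp [hk']; omega
        rw [this] at hlow
        omega
    · have : ((c i).val + 1) * m = (c i).val * m + m := by ring
      omega
  · rintro ⟨h1, h2⟩
    have hik : c i ≤ k := (le_iff_lt_mul c hc hsize' k i).mpr (by
      have : (k.val + 1) * m = k.val * m + m := by ring
      omega)
    have hup : i.val < ((c i).val + 1) * m := (le_iff_lt_mul c hc hsize' (c i) i).mp le_rfl
    have hki : k ≤ c i := by
      rw [Fin.le_def]
      by_contra hcon
      have hlt : (c i).val + 1 ≤ k.val := by omega
      have : ((c i).val + 1) * m ≤ k.val * m := Nat.mul_le_mul_right m hlt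
      omega
    exact le_antisymm hik hki

end Struct

section Count
variable {n q m : ℕ} (c : Fin n → Fin q)

def xcnt (σ : Equiv.Perm (Fin n)) (k : Fin q) (p : ℕ) : ℕ :=
  (univ.filter (fun i : Fin n => c i = k ∧ (σ i).val ≤ p)).card

variable (hc : Monotone c) (hsize' : ∀ k : Fin q, (univ.filter (fun i => c i = k)).card = m)
  (hnm : q * m = n)

include hsize' in
lemma xcnt_le (σ : Equiv.Perm (Fin n)) (k : Fin q) (p : ℕ) : xcnt c σ k p ≤ m := by
  rw [← hsize' k]
  apply Finset.card_le_card
  intro i hi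
  simp only [mem_filter, mem_univ, true_and] at hi ⊢
  exact hi.1

lemma xcnt_sum (σ : Equiv.Perm (Fin n)) (p : ℕ) (hp : p + 1 ≤ n) :
    ∑ k : Fin q, xcnt c σ k p = p + 1 := by
  have h1 : (univ.filter (fun i : Fin n => (σ i).val ≤ p)).card = ∑ k : Fin q,
      ((univ.filter (fun i : Fin n => (σ i).val ≤ p)).filter (fun i => c i = k)).card :=
    Finset.card_eq_sum_card_fiberwise (fun x _ => mem_univ (c x))
  have h2 : ∀ k : Fin q, ((univ.filter (fun i : Fin n => (σ i).val ≤ p)).filter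
      (fun i => c i = k)) = univ.filter (fun i : Fin n => c i = k ∧ (σ i).val ≤ p) := by
    intro k
    rw [Finset.filter_filter]
    ext i
    simp only [mem_filter, mem_univ, true_and]
    tauto
  have h3 : (univ.filter (fun i : Fin n => (σ i).val ≤ p)).card = p + 1 := by
    have himg : Finset.image σ (univ.filter fun i : Fin n => (σ i).val ≤ p)
        = univ.filter (fun j : Fin n => j.val ≤ p) := by
      ext j
      simp only [Finset.mem_image, mem_filter, mem_univ, true_and]
      constructor
      · rintro ⟨i, hi, rfl⟩; exact hi
      · intro hj; exact ⟨σ.symm j, by simpa using hj, by simp⟩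
    have := Finset.card_image_of_injective
      (univ.filter fun i : Fin n => (σ i).val ≤ p) σ.injective
    rw [himg] at this
    rw [← this, card_val_filter (fun a => a ≤ p)]
    have : (range n).filter (fun a => a ≤ p) = range (p + 1) := by
      ext a; simp; omega
    rw [this, card_range]
  rw [← h3, h1]
  exact Finset.sum_congr rfl fun k _ => by rw [h2 k]; rfl

include hc hsize' hnm in
lemma xcnt_id (k : Fin q) (p : ℕ) :
    xcnt c (Equiv.refl (Fin n)) k p = min m ((p+1) - k.val * m) := by
  have hkm : k.val * m + m ≤ n := by
    have h1 : (k.val + 1) * m ≤ q * m := Nat.mul_le_mul_right m k.isLt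
    have h2 : (k.val + 1) * m = k.val * m + m := by ring
    omega
  have e1 : (univ.filter (fun i : Fin n => c i = k ∧ ((Equiv.refl (Fin n)) i).val ≤ p))
      = univ.filter (fun i : Fin n => (k.val * m ≤ i.val ∧ i.val < k.val * m + m) ∧ i.val ≤ p) := by
    ext i
    simp only [mem_filter, mem_univ, true_and]
    rw [Equiv.refl_apply, struct c hc hsize' i k]
  rw [xcnt, e1, card_val_filter (fun a => (k.val * m ≤ a ∧ a < k.val * m + m) ∧ a ≤ p)]
  have e2 : (range n).filter (fun a => (k.val * m ≤ a ∧ a < k.val * m + m) ∧ a ≤ p)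
      = Ico (k.val * m) (min (k.val * m + m) (p + 1)) := by
    ext a
    simp only [mem_filter, mem_range, mem_Ico]
    omega
  rw [e2, Nat.card_Ico]
  omega

lemma cnt_factor (σ : Equiv.Perm (Fin n)) (p s : ℕ) :
    (∑ i : Fin n, ∑ j : Fin n,
        if c i = c j ∧ (σ i).val ≤ p ∧ (σ j).val ≤ s then (1:ℕ) else 0)
      = ∑ k : Fin q, xcnt c σ k p * xcnt c σ k s := by
  have step1 : ∀ i : Fin n, (∑ j : Fin n,
      if c i = c j ∧ (σ i).val ≤ p ∧ (σ j).val ≤ s then (1:ℕ) else 0)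
      = if (σ i).val ≤ p then xcnt c σ (c i) s else 0 := by
    intro i
    by_cases hip : (σ i).val ≤ p
    · rw [if_pos hip, xcnt, Finset.card_filter]
      refine Finset.sum_congr rfl fun j _ => ?_
      refine if_congr ?_ rfl rfl
      constructor
      · rintro ⟨h1, _, h3⟩; exact ⟨h1.symm, h3⟩
      · rintro ⟨h1, h2⟩; exact ⟨h1.symm, hip, h2⟩
    · rw [if_neg hip]
      apply Finset.sum_eq_zero
      intro j _
      rw [if_neg]
      tauto
  have step2 : ∀ i : Fin n, (if (σ i).val ≤ p then xcnt c σ (c i) s else 0)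
      = ∑ k : Fin q, (if c i = k ∧ (σ i).val ≤ p then xcnt c σ k s else 0) := by
    intro i
    by_cases hip : (σ i).val ≤ p
    · simp only [hip, and_true, if_pos]
      rw [Finset.sum_ite_eq]
      simp
    · simp [hip]
  have step3 : ∀ k : Fin q,
      (∑ i : Fin n, if c i = k ∧ (σ i).val ≤ p then xcnt c σ k s else 0)
      = xcnt c σ k p * xcnt c σ k s := by
    intro k
    rw [← Finset.sum_filter, Finset.sum_const, smul_eq_mul]
    rfl
  rw [Finset.sum_congr rfl fun i _ => step1 i, Finset.sum_congr rfl fun i _ => step2 i,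
    Finset.sum_comm, Finset.sum_congr rfl fun k _ => step3 k]

include hc hsize' hnm in
lemma cnt_le (σ : Equiv.Perm (Fin n)) (hm : 0 < m) (p s : ℕ) (hp : p + 1 ≤ n) (hs : s + 1 ≤ n) :
    (∑ i : Fin n, ∑ j : Fin n,
        if c i = c j ∧ (σ i).val ≤ p ∧ (σ j).val ≤ s then (1:ℕ) else 0)
    ≤ (∑ i : Fin n, ∑ j : Fin n,
        if c i = c j ∧ i.val ≤ p ∧ j.val ≤ s then (1:ℕ) else 0) := by
  have hid : (∑ i : Fin n, ∑ j : Fin n,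
      if c i = c j ∧ i.val ≤ p ∧ j.val ≤ s then (1:ℕ) else 0)
      = ∑ k : Fin q, xcnt c (Equiv.refl (Fin n)) k p * xcnt c (Equiv.refl (Fin n)) k s := by
    rw [← cnt_factor c (Equiv.refl (Fin n)) p s]
    rfl
  rw [cnt_factor c σ p s, hid]
  have hcore := core m q hm (fun k => xcnt c σ k p) (fun k => xcnt c σ k s)
    (fun k => xcnt_le c hsize' σ k p) (fun k => xcnt_le c hsize' σ k s)
  rw [xcnt_sum c σ p hp, xcnt_sum c σ s hs] at hcore
  refine le_trans hcore (le_of_eq ?_)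
  refine Finset.sum_congr rfl fun k _ => ?_
  rw [xcnt_id c hc hsize' hnm k p, xcnt_id c hc hsize' hnm k s]
end Count
section Decomp
variable {n : ℕ} (A : Matrix (Fin n) (Fin n) ℝ)

def AbX : ℕ → ℕ → ℝ := fun i j => if h : i < n ∧ j < n then A ⟨i, h.1⟩ ⟨j, h.2⟩ else 0

def ddX : ℕ → ℕ → ℝ := fun p s => AbX A p s + AbX A (p+1) (s+1) - AbX A p (s+1) - AbX A (p+1) s

lemma Ab_apply (i j : Fin n) : AbX A i.val j.val = A i j := by
  rw [AbX, dif_pos ⟨i.isLt, j.isLt⟩]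

lemma dd_nonneg (hAM : ∀ i r j s : Fin n, i < r → j < s → A i s + A r j ≤ A i j + A r s)
    (p s : ℕ) (hp : p + 1 < n) (hs : s + 1 < n) : 0 ≤ ddX A p s := by
  have h := hAM ⟨p, by omega⟩ ⟨p+1, hp⟩ ⟨s, by omega⟩ ⟨s+1, hs⟩
    (by simp [Fin.lt_def]) (by simp [Fin.lt_def])
  rw [ddX, AbX, AbX, AbX, AbX, dif_pos ⟨by omega, by omega⟩, dif_pos ⟨by omega, by omega⟩,
    dif_pos ⟨by omega, by omega⟩, dif_pos ⟨by omega, by omega⟩]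
  linarith

lemma tel (f : ℕ → ℝ) (a b : ℕ) (hab : a ≤ b) :
    ∑ x ∈ Finset.Ico a b, (f x - f (x+1)) = f a - f b := by
  induction b, hab using Nat.le_induction with
  | base => simp
  | succ b hab ih => rw [Finset.sum_Ico_succ_top hab, ih]; ring

lemma DEC (i j : Fin n) : A i j = AbX A i.val (n-1) + AbX A (n-1) j.val - AbX A (n-1) (n-1)
    + ∑ p ∈ Finset.Ico i.val (n-1), ∑ s ∈ Finset.Ico j.val (n-1), ddX A p s := by
  have hi' : i.val ≤ n - 1 := by have := i.isLt; omega
  have hj' : j.val ≤ n - 1 := by have := j.isLt; omega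
  have inner : ∀ p : ℕ, ∑ s ∈ Finset.Ico j.val (n-1), ddX A p s
      = (fun p' => AbX A p' j.val - AbX A p' (n-1)) p - (fun p' => AbX A p' j.val - AbX A p' (n-1)) (p+1) := by
    intro p
    have e : ∀ s, ddX A p s
        = (fun s' => AbX A p s' - AbX A (p+1) s') s - (fun s' => AbX A p s' - AbX A (p+1) s') (s+1) := by
      intro s; simp only [ddX]; ring
    rw [Finset.sum_congr rfl fun s _ => e s, tel _ j.val (n-1) hj']
    ring
  rw [Finset.sum_congr rfl fun p _ => inner p, tel _ i.val (n-1) hi', ← Ab_apply A i j]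
  ring

end Decomp

theorem stmt18 {n q : ℕ} (A B : Matrix (Fin n) (Fin n) ℝ)
    (hsym : A.IsSymm)
    (hnonneg : ∀ i j, 0 ≤ A i j)
    (hAM : ∀ i r j s : Fin n, i < r → j < s → A i s + A r j ≤ A i j + A r s)
    (c : Fin n → Fin q) (hc : Monotone c)
    (hB : ∀ i j, B i j = if c i = c j then (0 : ℝ) else 1)
    (hsize : ∀ k : Fin q, (Finset.univ.filter (fun i => c i = k)).card = n / q)
    (hdvd : q ∣ n) :
    ∀ π : Equiv.Perm (Fin n), Z A B (Equiv.refl (Fin n)) ≤ Z A B π := by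
  intro π
  rcases Nat.eq_zero_or_pos n with hn0 | hn0
  · subst hn0
    simp [Z]
  set m := n / q with hmdef
  have hnm : q * m = n := Nat.mul_div_cancel' hdvd
  have hm : 0 < m := by
    rcases Nat.eq_zero_or_pos m with h | h
    · rw [h, mul_zero] at hnm; omega
    · exact h
  have hsize' : ∀ k : Fin q, (univ.filter (fun i => c i = k)).card = m := hsize
  -- Reduce to same-block sums
  have hZW : ∀ σ : Equiv.Perm (Fin n), Z A B σ = (∑ i, ∑ j, A i j)
      - (∑ i, ∑ j, (if c i = c j then A (σ i) (σ j) else 0)) := by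
    intro σ
    have hTot : (∑ i, ∑ j, A (σ i) (σ j)) = ∑ i, ∑ j, A i j := by
      rw [Equiv.sum_comp σ (fun a => ∑ j, A a (σ j))]
      exact Finset.sum_congr rfl fun i _ => Equiv.sum_comp σ (fun b => A i b)
    calc Z A B σ
        = ∑ i, ∑ j, (A (σ i) (σ j) - (if c i = c j then A (σ i) (σ j) else 0)) := by
          refine Finset.sum_congr rfl fun i _ => Finset.sum_congr rfl fun j _ => ?_
          rw [hB i j]; split <;> ring
      _ = (∑ i, ∑ j, A (σ i) (σ j))
          - (∑ i, ∑ j, (if c i = c j then A (σ i) (σ j) else 0)) := by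
          rw [← Finset.sum_sub_distrib]
          exact Finset.sum_congr rfl fun i _ => Finset.sum_sub_distrib _ _
      _ = _ := by rw [hTot]
  rw [hZW π, hZW (Equiv.refl (Fin n))]
  have hWle : (∑ i, ∑ j, (if c i = c j then A (π i) (π j) else 0))
      ≤ (∑ i, ∑ j, (if c i = c j then A ((Equiv.refl (Fin n)) i) ((Equiv.refl (Fin n)) j) else 0)) := by
    -- split every σ-version into linear + quadratic parts
    have hsplit : ∀ σ : Equiv.Perm (Fin n),
        (∑ i, ∑ j, (if c i = c j then A (σ i) (σ j) else 0))
        = (((∑ i, ∑ j, (if c i = c j then AbX A (σ i).val (n-1) else 0))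
          + (∑ i, ∑ j, (if c i = c j then AbX A (n-1) (σ j).val else 0)))
          - (∑ i, ∑ j, (if c i = c j then AbX A (n-1) (n-1) else 0)))
          + (∑ i, ∑ j, (if c i = c j then
              (∑ p ∈ Finset.Ico (σ i).val (n-1), ∑ s ∈ Finset.Ico (σ j).val (n-1), ddX A p s)
              else 0)) := by
      intro σ
      have e : ∀ i j : Fin n, (if c i = c j then A (σ i) (σ j) else 0)
          = (((if c i = c j then AbX A (σ i).val (n-1) else 0)
            + (if c i = c j then AbX A (n-1) (σ j).val else 0))
            - (if c i = c j then AbX A (n-1) (n-1) else 0))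
            + (if c i = c j then
              (∑ p ∈ Finset.Ico (σ i).val (n-1), ∑ s ∈ Finset.Ico (σ j).val (n-1), ddX A p s)
              else 0) := by
        intro i j
        rw [DEC A (σ i) (σ j)]
        split <;> ring
      rw [Finset.sum_congr rfl fun i _ => Finset.sum_congr rfl fun j _ => e i j]
      simp only [← Finset.sum_add_distrib, ← Finset.sum_sub_distrib]
    -- linear parts are permutation invariant
    have fibR : ∀ i : Fin n, (∑ j : Fin n, if c i = c j then (1:ℝ) else 0) = m := by
      intro i
      have e : ∀ j : Fin n, (if c i = c j then (1:ℝ) else 0) = (if c j = c i then (1:ℝ) else 0) :=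
        fun j => if_congr eq_comm rfl rfl
      rw [Finset.sum_congr rfl fun j _ => e j, Finset.sum_boole]
      exact_mod_cast congrArg (Nat.cast : ℕ → ℝ) (hsize' (c i))
    have fibL : ∀ j : Fin n, (∑ i : Fin n, if c i = c j then (1:ℝ) else 0) = m := by
      intro j
      rw [Finset.sum_boole]
      exact_mod_cast congrArg (Nat.cast : ℕ → ℝ) (hsize' (c j))
    have hlinR : ∀ (σ : Equiv.Perm (Fin n)) (g : ℕ → ℝ),
        (∑ i, ∑ j, (if c i = c j then g (σ i).val else 0)) = (m:ℝ) * ∑ a : Fin n, g a.val := by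
      intro σ g
      have e1 : ∀ i : Fin n, (∑ j, if c i = c j then g (σ i).val else 0) = g (σ i).val * m := by
        intro i
        rw [← fibR i, Finset.mul_sum]
        exact Finset.sum_congr rfl fun j _ => by split <;> ring
      rw [Finset.sum_congr rfl fun i _ => e1 i, ← Finset.sum_mul,
        Equiv.sum_comp σ (fun a : Fin n => g a.val)]
      ring
    have hlinL : ∀ (σ : Equiv.Perm (Fin n)) (g : ℕ → ℝ),
        (∑ i, ∑ j, (if c i = c j then g (σ j).val else 0)) = (m:ℝ) * ∑ a : Fin n, g a.val := by
      intro σ g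
      rw [Finset.sum_comm]
      have e1 : ∀ j : Fin n, (∑ i, if c i = c j then g (σ j).val else 0) = g (σ j).val * m := by
        intro j
        rw [← fibL j, Finset.mul_sum]
        exact Finset.sum_congr rfl fun i _ => by split <;> ring
      rw [Finset.sum_congr rfl fun j _ => e1 j, ← Finset.sum_mul,
        Equiv.sum_comp σ (fun a : Fin n => g a.val)]
      ring
    -- quadratic part
    have hIco : ∀ (Q : Prop) [Decidable Q] (b : ℕ) (f : ℕ → ℝ),
        (if Q then ∑ s ∈ Finset.Ico b (n-1), f s else 0)
        = ∑ s ∈ Finset.range (n-1), if Q ∧ b ≤ s then f s else 0 := by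
      intro Q _ b f
      split
      case isTrue h =>
        have e : Finset.Ico b (n-1) = (Finset.range (n-1)).filter (fun s => b ≤ s) := by
          ext a; simp only [Finset.mem_Ico, Finset.mem_filter, Finset.mem_range]; omega
        rw [e, Finset.sum_filter]
        exact Finset.sum_congr rfl fun s _ => by simp [h]
      case isFalse h =>
        symm; apply Finset.sum_eq_zero; intro s _; simp [h]
    have hquad : ∀ σ : Equiv.Perm (Fin n),
        (∑ i, ∑ j, (if c i = c j then
            (∑ p ∈ Finset.Ico (σ i).val (n-1), ∑ s ∈ Finset.Ico (σ j).val (n-1), ddX A p s)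
            else 0))
        = ∑ p ∈ Finset.range (n-1), ∑ s ∈ Finset.range (n-1), ddX A p s *
            (((∑ i : Fin n, ∑ j : Fin n,
              if c i = c j ∧ (σ i).val ≤ p ∧ (σ j).val ≤ s then (1:ℕ) else 0) : ℕ) : ℝ) := by
      intro σ
      have e1 : ∀ i j : Fin n, (if c i = c j then
          (∑ p ∈ Finset.Ico (σ i).val (n-1), ∑ s ∈ Finset.Ico (σ j).val (n-1), ddX A p s) else 0)
          = ∑ p ∈ Finset.range (n-1), ∑ s ∈ Finset.range (n-1),
              (if c i = c j ∧ (σ i).val ≤ p ∧ (σ j).val ≤ s then ddX A p s else 0) := by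
        intro i j
        rw [hIco (c i = c j) (σ i).val
          (fun p => ∑ s ∈ Finset.Ico (σ j).val (n-1), ddX A p s)]
        refine Finset.sum_congr rfl fun p _ => ?_
        rw [hIco (c i = c j ∧ (σ i).val ≤ p) (σ j).val (fun s => ddX A p s)]
        exact Finset.sum_congr rfl fun s _ => if_congr (by tauto) rfl rfl
      rw [Finset.sum_congr rfl fun i _ => Finset.sum_congr rfl fun j _ => e1 i j]
      rw [Finset.sum_congr rfl fun i _ => Finset.sum_comm]
      rw [Finset.sum_comm]
      refine Finset.sum_congr rfl fun p _ => ?_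
      rw [Finset.sum_congr rfl fun i _ => Finset.sum_comm]
      rw [Finset.sum_comm]
      refine Finset.sum_congr rfl fun s _ => ?_
      push_cast
      rw [Finset.mul_sum]
      refine Finset.sum_congr rfl fun i _ => ?_
      rw [Finset.mul_sum]
      refine Finset.sum_congr rfl fun j _ => ?_
      split <;> simp
    rw [hsplit π, hsplit (Equiv.refl (Fin n))]
    simp only [hlinR π (fun a => AbX A a (n-1)), hlinR (Equiv.refl (Fin n)) (fun a => AbX A a (n-1)),
      hlinL π (fun a => AbX A (n-1) a), hlinL (Equiv.refl (Fin n)) (fun a => AbX A (n-1) a),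
      hquad π, hquad (Equiv.refl (Fin n))]
    simp only [Equiv.refl_apply]
    have hQle : (∑ p ∈ Finset.range (n-1), ∑ s ∈ Finset.range (n-1), ddX A p s *
            (((∑ i : Fin n, ∑ j : Fin n,
              if c i = c j ∧ (π i).val ≤ p ∧ (π j).val ≤ s then (1:ℕ) else 0) : ℕ) : ℝ))
        ≤ (∑ p ∈ Finset.range (n-1), ∑ s ∈ Finset.range (n-1), ddX A p s *
            (((∑ i : Fin n, ∑ j : Fin n,
              if c i = c j ∧ i.val ≤ p ∧ j.val ≤ s then (1:ℕ) else 0) : ℕ) : ℝ)) := by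
      refine Finset.sum_le_sum fun p hp => Finset.sum_le_sum fun s hs => ?_
      have hp' : p + 1 < n := by have := Finset.mem_range.mp hp; omega
      have hs' : s + 1 < n := by have := Finset.mem_range.mp hs; omega
      have hdd := dd_nonneg A hAM p s hp' hs'
      have hcnt := cnt_le c hc hsize' hnm π hm p s (by omega) (by omega)
      exact mul_le_mul_of_nonneg_left (by exact_mod_cast hcnt) hdd
    exact add_le_add (le_refl _) hQle
  linarith
end
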